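/- arXiv:2505.09768 — 5 statements merged into one kernel-verified Lean document; each statement's English description precedes it below -/
import Mathlib

section
/- If Cov_p[e^{r}, e^{r̃}] ≥ 0, then the adversarially reweighted update q(x) = p(x)·[(1−φ)·e^{r(x)}/E_p[e^{r}] + φ·e^{r̃(x)}/E_p[e^{r̃}]] satisfies E_q[e^{r}] ≥ E_p[e^{r}]: the expected user reward is monotone non-decreasing in one retraining step despite the adversarial component. -/
open MeasureTheory Real

/-!
Write `A = E_p[e^r]` and `B = E_p[e^{r̃}]`. Then `E_q[e^r]` is the mixture
`(1 - φ) E_p[e^{2r}] / A + φ E_p[e^{r + r̃}] / B`. The first term is at least `A` by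
Jensen (the variance of `e^r` under `p` is nonnegative), the second is at least `A` exactly
when the covariance of `e^r` and `e^{r̃}` is nonnegative, so the mixture is at least `A`.
-/

section WeightedIntegrals

variable {α : Type*} [MeasurableSpace α] {μ : Measure α} {p : α → ℝ}

lemma MeasureTheory.Integrable.mul_exp_of_abs_le (hp : Integrable p μ) {g : α → ℝ} (hg : Measurable g)
    {C : ℝ} (hC : ∀ x, |g x| ≤ C) : Integrable (fun x => p x * exp (g x)) μ :=
  hp.mul_bdd (c := exp C) (measurable_exp.comp hg).aestronglyMeasurable
    (Filter.Eventually.of_forall fun x => by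
      rw [norm_of_nonneg (exp_pos _).le]
      exact exp_le_exp.mpr (abs_le.mp (hC x)).2)

lemma sq_integral_mul_le_integral_mul_sq (hp : 0 ≤ p) (hp_int : Integrable p μ)
    (hp_one : ∫ x, p x ∂μ = 1) {f : α → ℝ} (hpf : Integrable (fun x => p x * f x) μ)
    (hpf2 : Integrable (fun x => p x * (f x * f x)) μ) :
    (∫ x, p x * f x ∂μ) ^ 2 ≤ ∫ x, p x * (f x * f x) ∂μ := by
  set m := ∫ x, p x * f x ∂μ
  have hvar : 0 ≤ ∫ x, p x * (f x - m) ^ 2 ∂μ :=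
    integral_nonneg fun x => mul_nonneg (hp x) (sq_nonneg _)
  have hexpand : (fun x => p x * (f x - m) ^ 2)
      = fun x => p x * (f x * f x) - 2 * m * (p x * f x) + m ^ 2 * p x := by
    funext x; ring
  have hcross : Integrable (fun x => p x * (f x * f x) - 2 * m * (p x * f x)) μ :=
    hpf2.sub (hpf.const_mul _)
  rw [hexpand, integral_add hcross (hp_int.const_mul _), integral_sub hpf2 (hpf.const_mul _),
    integral_const_mul, integral_const_mul, hp_one] at hvar
  nlinarith

end WeightedIntegrals

lemma le_mix_div_of_sq_le_of_mul_le {A B S T φ : ℝ} (hA : 0 < A) (hB : 0 < B)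
    (hφ : φ ∈ Set.Icc (0 : ℝ) 1) (hS : A ^ 2 ≤ S) (hT : A * B ≤ T) :
    A ≤ (1 - φ) / A * S + φ / B * T := by
  have hSA : A ≤ S / A := by rw [le_div_iff₀ hA]; nlinarith
  have hTB : A ≤ T / B := by rw [le_div_iff₀ hB]; linarith
  calc A = (1 - φ) * A + φ * A := by ring
    _ ≤ (1 - φ) * (S / A) + φ * (T / B) := by
        gcongr
        · linarith [hφ.2]
        · exact hφ.1
    _ = (1 - φ) / A * S + φ / B * T := by ring

theorem stmt_5_general {d : ℕ} (p r rt : (Fin d → ℝ) → ℝ) (φ : ℝ)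
    (hp_nonneg : ∀ x, 0 ≤ p x)
    (hp_int : Integrable p) (hp_one : ∫ x, p x = 1)
    (hr_meas : Measurable r) (hrt_meas : Measurable rt)
    (hr_bdd : ∃ C, ∀ x, |r x| ≤ C) (hrt_bdd : ∃ C, ∀ x, |rt x| ≤ C)
    (hEr_pos : 0 < ∫ x, p x * exp (r x))
    (hErt_pos : 0 < ∫ x, p x * exp (rt x))
    (hφ : φ ∈ Set.Icc (0 : ℝ) 1)
    (hcov : 0 ≤ (∫ x, p x * exp (r x + rt x))
        - (∫ x, p x * exp (r x)) * (∫ x, p x * exp (rt x))) :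
    (∫ x, p x * exp (r x))
      ≤ ∫ x, p x * ((1 - φ) * exp (r x) / (∫ z, p z * exp (r z))
            + φ * exp (rt x) / (∫ z, p z * exp (rt z))) * exp (r x) := by
  obtain ⟨Cr, hCr⟩ := hr_bdd
  obtain ⟨Ct, hCt⟩ := hrt_bdd
  set A := ∫ x, p x * exp (r x)
  set B := ∫ x, p x * exp (rt x)
  have hrr : Integrable (fun x => p x * exp (r x + r x)) :=
    hp_int.mul_exp_of_abs_le (hr_meas.add hr_meas) fun x =>
      (abs_add_le _ _).trans (add_le_add (hCr x) (hCr x))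
  have hrrt : Integrable (fun x => p x * exp (r x + rt x)) :=
    hp_int.mul_exp_of_abs_le (hr_meas.add hrt_meas) fun x =>
      (abs_add_le _ _).trans (add_le_add (hCr x) (hCt x))
  have hjensen : A ^ 2 ≤ ∫ x, p x * exp (r x + r x) := by
    simp_rw [exp_add]
    exact sq_integral_mul_le_integral_mul_sq hp_nonneg hp_int hp_one
      (hp_int.mul_exp_of_abs_le hr_meas hCr) (by simpa only [exp_add] using hrr)
  have hmix : (fun x => p x * ((1 - φ) * exp (r x) / A + φ * exp (rt x) / B) * exp (r x))
      = fun x => (1 - φ) / A * (p x * exp (r x + r x)) + φ / B * (p x * exp (r x + rt x)) := by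
    funext x; simp only [exp_add]; ring
  rw [hmix, integral_add (hrr.const_mul _) (hrrt.const_mul _), integral_const_mul,
    integral_const_mul]
  exact le_mix_div_of_sq_le_of_mul_le hEr_pos hErt_pos hφ hjensen (by linarith)

/-- If `Cov_p[e^r, e^{r̃}] ≥ 0`, one step of the adversarially curated
self-consuming loop does not decrease the expected user reward: `E_q[e^r] ≥ E_p[e^r]`. -/
theorem stmt_5 {d : ℕ} (p r rt : (Fin d → ℝ) → ℝ) (φ : ℝ)
    (hp_nonneg : ∀ x, 0 ≤ p x) (hp_meas : Measurable p)
    (hp_int : Integrable p) (hp_one : ∫ x, p x = 1)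
    (hr_meas : Measurable r) (hrt_meas : Measurable rt)
    (hr_bdd : ∃ C, ∀ x, |r x| ≤ C) (hrt_bdd : ∃ C, ∀ x, |rt x| ≤ C)
    (hEr_pos : 0 < ∫ x, p x * exp (r x))
    (hErt_pos : 0 < ∫ x, p x * exp (rt x))
    (hφ : φ ∈ Set.Icc (0 : ℝ) 1)
    (hcov : 0 ≤ (∫ x, p x * exp (r x + rt x))
        - (∫ x, p x * exp (r x)) * (∫ x, p x * exp (rt x))) :
    (∫ x, p x * exp (r x))
      ≤ ∫ x, p x * ((1 - φ) * exp (r x) / (∫ z, p z * exp (r z))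
            + φ * exp (rt x) / (∫ z, p z * exp (rt z))) * exp (r x) :=
  stmt_5_general p r rt φ hp_nonneg hp_int hp_one hr_meas hrt_meas hr_bdd hrt_bdd hEr_pos hErt_pos
    hφ hcov
end

section
/- For K i.i.d. samples X₁, …, X_K from density p, let X̂ be chosen among them with probability proportional to e^{r(X_k)} (Bradley–Terry selection). Then E[e^{r(X̂)}] ≥ E_p[e^{r}] + ((K−1)/K)·Var_p[e^{r}]/e^{r_max}, where r_max is an upper bound on r. -/
/-!
Write `wₖ = e^{r(Xₖ)}`, and let `m`, `v` be the empirical mean and (biased) empirical variance of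
`w₁, …, w_K`. Conditionally on the samples, `E[e^{r(X̂)}] = ∑ wₖ² / ∑ wₖ = m + v / m`, and
`m ≤ e^{r_max}` gives `E[e^{r(X̂)}] ≥ m + v / e^{r_max}` pointwise. Since the samples are i.i.d.,
`E[m] = E_p[e^r]` and `E[v] = ((K - 1) / K) Var_p[e^r]`, and integrating the pointwise bound gives
the claim.
-/

open MeasureTheory Real

theorem mean_add_variance_div_le_sum_mul_div_sum {ι : Type*} [Fintype ι] [Nonempty ι]
    {w : ι → ℝ} {E : ℝ} (hw : ∀ i, 0 < w i) (hwE : ∀ i, w i ≤ E) :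
    (∑ i, w i) / Fintype.card ι
        + ((∑ i, w i ^ 2) / Fintype.card ι - ((∑ i, w i) / Fintype.card ι) ^ 2) / E
      ≤ ∑ k, w k / (∑ i, w i) * w k := by
  set n : ℝ := (Fintype.card ι : ℝ)
  set S := ∑ i, w i
  set Q := ∑ i, w i ^ 2
  have hn : 0 < n := by simp [n, Fintype.card_pos]
  have hS : 0 < S := Finset.sum_pos (fun i _ => hw i) Finset.univ_nonempty
  have hSE : S / n ≤ E := by
    rw [div_le_iff₀ hn, mul_comm]
    simpa [n] using Finset.sum_le_sum fun i (_ : i ∈ Finset.univ) => hwE i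
  have hvar : 0 ≤ Q / n - (S / n) ^ 2 := by
    have hCS : S ^ 2 ≤ n * Q := by
      simpa [n, S, Q] using sq_sum_le_card_mul_sum_sq (s := Finset.univ) (f := w)
    rw [sub_nonneg, div_pow, div_le_div_iff₀ (by positivity) hn]
    nlinarith
  have hsel : ∑ k, w k / S * w k = Q / S := by
    simp only [Q, Finset.sum_div, div_mul_eq_mul_div, sq]
  calc S / n + (Q / n - (S / n) ^ 2) / E
      ≤ S / n + (Q / n - (S / n) ^ 2) / (S / n) := by gcongr
    _ = ∑ k, w k / S * w k := by
        rw [hsel]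
        field_simp
        ring

theorem mul_mean_add_variance_div_eq (P S Q n E : ℝ) :
    P * (S / n + (Q / n - (S / n) ^ 2) / E)
      = 1 / n * (P * S) + 1 / (n * E) * (P * Q) - 1 / (n ^ 2 * E) * (P * S ^ 2) := by
  ring

theorem Fintype.prod_ite_ite_eq_mul {ι β : Type*} [Fintype ι] [DecidableEq ι] [CommMonoid β]
    (a b : ι → β) {j k : ι} (hjk : j ≠ k) :
    ∏ i, (if i = j then a i else if i = k then b i else 1) = a j * b k := by
  rw [Fintype.prod_eq_mul j k hjk fun i hi => by simp [hi.1, hi.2]]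
  simp [hjk.symm]

section ProductDensity

variable {ι α : Type*} [Fintype ι] [MeasurableSpace α] {ν : Measure α} [SigmaFinite ν]
  {p f g : α → ℝ}

theorem integrable_pi_density_mul_prod {q : ι → α → ℝ}
    (hq : ∀ i, Integrable (fun y => p y * q i y) ν) :
    Integrable (fun x : ι → α => (∏ i, p (x i)) * ∏ i, q i (x i)) (Measure.pi fun _ => ν) := by
  simp_rw [← Finset.prod_mul_distrib]
  exact Integrable.fintype_prod (f := fun i y => p y * q i y) hq

theorem integral_pi_density_mul_prod (q : ι → α → ℝ) :
    ∫ x : ι → α, (∏ i, p (x i)) * ∏ i, q i (x i) ∂(Measure.pi fun _ => ν)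
      = ∏ i, ∫ y, p y * q i y ∂ν := by
  simp_rw [← Finset.prod_mul_distrib]
  exact integral_fintype_prod_eq_prod (fun i y => p y * q i y)

theorem integrable_pi_density_mul_eval (hp : Integrable p ν)
    (hf : Integrable (fun y => p y * f y) ν) (k : ι) :
    Integrable (fun x : ι → α => (∏ i, p (x i)) * f (x k)) (Measure.pi fun _ => ν) := by
  classical
  simpa using integrable_pi_density_mul_prod (ν := ν) (q := fun i y => if i = k then f y else 1)
    fun i => by split_ifs <;> simpa

theorem integral_pi_density_mul_eval (hp_one : ∫ y, p y ∂ν = 1) (f : α → ℝ) (k : ι) :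
    ∫ x : ι → α, (∏ i, p (x i)) * f (x k) ∂(Measure.pi fun _ => ν) = ∫ y, p y * f y ∂ν := by
  classical
  have h := integral_pi_density_mul_prod (ν := ν) (p := p) fun i y => if i = k then f y else 1
  rw [Fintype.prod_eq_single k fun i hi => by simp [hi, hp_one]] at h
  simpa using h

theorem integrable_pi_density_mul_eval_mul_eval (hp : Integrable p ν)
    (hf : Integrable (fun y => p y * f y) ν) (hg : Integrable (fun y => p y * g y) ν)
    (hfg : Integrable (fun y => p y * (f y * g y)) ν) (j k : ι) :
    Integrable (fun x : ι → α => (∏ i, p (x i)) * (f (x j) * g (x k)))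
      (Measure.pi fun _ => ν) := by
  classical
  rcases eq_or_ne j k with rfl | hjk
  · exact integrable_pi_density_mul_eval hp hfg j
  have h := integrable_pi_density_mul_prod (ν := ν)
    (q := fun i y => if i = j then f y else if i = k then g y else 1)
    fun i => by split_ifs <;> simpa
  simpa only [Fintype.prod_ite_ite_eq_mul _ _ hjk] using h

theorem integral_pi_density_mul_eval_mul_eval_of_ne (hp_one : ∫ y, p y ∂ν = 1) (f g : α → ℝ)
    {j k : ι} (hjk : j ≠ k) :
    ∫ x : ι → α, (∏ i, p (x i)) * (f (x j) * g (x k)) ∂(Measure.pi fun _ => ν)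
      = (∫ y, p y * f y ∂ν) * ∫ y, p y * g y ∂ν := by
  classical
  have h := integral_pi_density_mul_prod (ν := ν) (p := p)
    fun i y => if i = j then f y else if i = k then g y else 1
  rw [Fintype.prod_eq_mul j k hjk fun i hi => by simp [hi.1, hi.2, hp_one]] at h
  simpa only [Fintype.prod_ite_ite_eq_mul _ _ hjk, hjk.symm, if_true, if_false] using h

theorem integrable_pi_density_mul_sum (hp : Integrable p ν)
    (hf : Integrable (fun y => p y * f y) ν) :
    Integrable (fun x : ι → α => (∏ i, p (x i)) * ∑ k, f (x k)) (Measure.pi fun _ => ν) := by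
  simp_rw [Finset.mul_sum]
  exact integrable_finsetSum _ fun k _ => integrable_pi_density_mul_eval hp hf k

theorem integral_pi_density_mul_sum (hp : Integrable p ν) (hp_one : ∫ y, p y ∂ν = 1)
    (hf : Integrable (fun y => p y * f y) ν) :
    ∫ x : ι → α, (∏ i, p (x i)) * ∑ k, f (x k) ∂(Measure.pi fun _ => ν)
      = Fintype.card ι * ∫ y, p y * f y ∂ν := by
  simp_rw [Finset.mul_sum]
  rw [integral_finsetSum _ fun k _ => integrable_pi_density_mul_eval hp hf k]
  simp [integral_pi_density_mul_eval hp_one]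

theorem integrable_pi_density_mul_sum_sq (hp : Integrable p ν)
    (hf : Integrable (fun y => p y * f y) ν) (hf2 : Integrable (fun y => p y * f y ^ 2) ν) :
    Integrable (fun x : ι → α => (∏ i, p (x i)) * (∑ k, f (x k)) ^ 2)
      (Measure.pi fun _ => ν) := by
  simp_rw [sq, Finset.sum_mul_sum, Finset.mul_sum]
  exact integrable_finsetSum _ fun j _ => integrable_finsetSum _ fun k _ =>
    integrable_pi_density_mul_eval_mul_eval hp hf hf (by simpa only [sq] using hf2) j k

theorem integral_pi_density_mul_sum_sq (hp : Integrable p ν) (hp_one : ∫ y, p y ∂ν = 1)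
    (hf : Integrable (fun y => p y * f y) ν) (hf2 : Integrable (fun y => p y * f y ^ 2) ν) :
    ∫ x : ι → α, (∏ i, p (x i)) * (∑ k, f (x k)) ^ 2 ∂(Measure.pi fun _ => ν)
      = Fintype.card ι * ∫ y, p y * f y ^ 2 ∂ν
        + Fintype.card ι * (Fintype.card ι - 1) * (∫ y, p y * f y ∂ν) ^ 2 := by
  classical
  have hff : Integrable (fun y => p y * (f y * f y)) ν := by simpa only [sq] using hf2
  have hpair (j k : ι) :
      ∫ x : ι → α, (∏ i, p (x i)) * (f (x j) * f (x k)) ∂(Measure.pi fun _ => ν)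
        = (∫ y, p y * f y ∂ν) ^ 2
          + if j = k then ∫ y, p y * f y ^ 2 ∂ν - (∫ y, p y * f y ∂ν) ^ 2 else 0 := by
    rcases eq_or_ne j k with rfl | hjk
    · rw [if_pos rfl, add_sub_cancel]
      simpa only [← sq] using integral_pi_density_mul_eval hp_one (fun y => f y ^ 2) j
    · simp [hjk, sq, integral_pi_density_mul_eval_mul_eval_of_ne hp_one f f hjk]
  simp_rw [sq (∑ k, f _), Finset.sum_mul_sum, Finset.mul_sum]
  rw [integral_finsetSum _ fun j _ => integrable_finsetSum _ fun k _ =>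
    integrable_pi_density_mul_eval_mul_eval hp hf hf hff j k]
  simp_rw [integral_finsetSum _ fun k _ =>
      integrable_pi_density_mul_eval_mul_eval hp hf hf hff _ k,
    hpair, Finset.sum_add_distrib, Finset.sum_ite_eq]
  simp only [Finset.sum_const, Finset.card_univ, nsmul_eq_mul, Finset.mem_univ, if_true]
  ring

theorem integrable_pi_density_mul_mean_add_variance_div (hp : Integrable p ν)
    (hf : Integrable (fun y => p y * f y) ν) (hf2 : Integrable (fun y => p y * f y ^ 2) ν)
    (E : ℝ) :
    Integrable (fun x : ι → α => (∏ i, p (x i)) * ((∑ k, f (x k)) / Fintype.card ι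
        + ((∑ k, f (x k) ^ 2) / Fintype.card ι - ((∑ k, f (x k)) / Fintype.card ι) ^ 2) / E))
      (Measure.pi fun _ => ν) := by
  simp_rw [mul_mean_add_variance_div_eq]
  exact (((integrable_pi_density_mul_sum hp hf).const_mul _).add
    ((integrable_pi_density_mul_sum hp hf2).const_mul _)).sub
      ((integrable_pi_density_mul_sum_sq hp hf hf2).const_mul _)

theorem integral_pi_density_mul_mean_add_variance_div [Nonempty ι] (hp : Integrable p ν)
    (hp_one : ∫ y, p y ∂ν = 1) (hf : Integrable (fun y => p y * f y) ν)
    (hf2 : Integrable (fun y => p y * f y ^ 2) ν) (E : ℝ) :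
    ∫ x : ι → α, (∏ i, p (x i)) * ((∑ k, f (x k)) / Fintype.card ι
        + ((∑ k, f (x k) ^ 2) / Fintype.card ι - ((∑ k, f (x k)) / Fintype.card ι) ^ 2) / E)
      ∂(Measure.pi fun _ => ν)
      = ∫ y, p y * f y ∂ν + (Fintype.card ι - 1) / Fintype.card ι
          * (∫ y, p y * f y ^ 2 ∂ν - (∫ y, p y * f y ∂ν) ^ 2) / E := by
  have hS := integrable_pi_density_mul_sum (ι := ι) hp hf
  have hQ := integrable_pi_density_mul_sum (ι := ι) hp hf2
  have hS2 := integrable_pi_density_mul_sum_sq (ι := ι) hp hf hf2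
  simp_rw [mul_mean_add_variance_div_eq]
  rw [integral_sub _ (hS2.const_mul _), integral_add (hS.const_mul _) (hQ.const_mul _),
    integral_const_mul, integral_const_mul, integral_const_mul,
    integral_pi_density_mul_sum hp hp_one hf, integral_pi_density_mul_sum hp hp_one hf2,
    integral_pi_density_mul_sum_sq hp hp_one hf hf2]
  · have hn : (Fintype.card ι : ℝ) ≠ 0 := by simp
    field_simp
    ring
  · exact (hS.const_mul _).add (hQ.const_mul _)

theorem ae_pi_density_mul_mean_add_variance_div_le [Nonempty ι] (hp : ∀ y, 0 ≤ p y)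
    (hf : ∀ y, 0 < f y) {E : ℝ} (hfE : ∀ᵐ y ∂ν, p y ≠ 0 → f y ≤ E) :
    ∀ᵐ x ∂(Measure.pi fun _ : ι => ν), (∏ i, p (x i)) * ((∑ k, f (x k)) / Fintype.card ι
        + ((∑ k, f (x k) ^ 2) / Fintype.card ι - ((∑ k, f (x k)) / Fintype.card ι) ^ 2) / E)
      ≤ (∏ i, p (x i)) * ∑ k, f (x k) / (∑ i, f (x i)) * f (x k) := by
  have hfE_pi : ∀ᵐ x ∂(Measure.pi fun _ : ι => ν), ∀ i, p (x i) ≠ 0 → f (x i) ≤ E :=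
    ae_all_iff.2 fun i =>
      (Measure.tendsto_eval_ae_ae (μ := fun _ : ι => ν) (i := i)).eventually hfE
  filter_upwards [hfE_pi] with x hx
  rcases (Finset.prod_nonneg (s := Finset.univ) fun i _ => hp (x i)).eq_or_lt with hP | hP
  · simp [← hP]
  refine mul_le_mul_of_nonneg_left ?_ hP.le
  exact mean_add_variance_div_le_sum_mul_div_sum (fun _ => hf _)
    fun i => hx i (Finset.prod_ne_zero_iff.1 hP.ne' i (Finset.mem_univ i))

end ProductDensity

theorem stmt_6_general {d : ℕ} (K : ℕ) (hK : 1 ≤ K) (p r : (Fin d → ℝ) → ℝ) (rmax : ℝ)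
    (hp_nonneg : ∀ x, 0 ≤ p x)
    (hp_int : Integrable p) (hp_one : ∫ x, p x = 1)
    (hr_ub : ∀ᵐ x, p x ≠ 0 → r x ≤ rmax)
    (hr_int : Integrable (fun x => p x * exp (r x)))
    (hr2_int : Integrable (fun x => p x * exp (2 * r x)))
    (hsel_int : Integrable (fun x : Fin K → (Fin d → ℝ) =>
      (∏ j, p (x j)) * ∑ k, exp (r (x k)) / (∑ j, exp (r (x j))) * exp (r (x k)))) :
    (∫ x, p x * exp (r x))
      + (((K : ℝ) - 1) / K)
          * ((∫ x, p x * exp (2 * r x)) - (∫ x, p x * exp (r x)) ^ 2) / exp rmax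
      ≤ ∫ x : Fin K → (Fin d → ℝ),
          (∏ j, p (x j)) * ∑ k, exp (r (x k)) / (∑ j, exp (r (x j))) * exp (r (x k)) := by
  have : Nonempty (Fin K) := ⟨⟨0, hK⟩⟩
  have hexp_two (t : ℝ) : exp (2 * t) = exp t ^ 2 := by rw [two_mul, exp_add, sq]
  simp only [hexp_two] at hr2_int ⊢
  have hexp_le : ∀ᵐ y, p y ≠ 0 → exp (r y) ≤ exp rmax :=
    hr_ub.mono fun y h hy => exp_le_exp.2 (h hy)
  have hint := integrable_pi_density_mul_mean_add_variance_div (ι := Fin K) hp_int hr_int hr2_int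
    (exp rmax)
  have hle := ae_pi_density_mul_mean_add_variance_div_le (ι := Fin K) hp_nonneg
    (fun _ => exp_pos _) hexp_le
  have hval := integral_pi_density_mul_mean_add_variance_div (ι := Fin K) hp_int hp_one hr_int
    hr2_int (exp rmax)
  simp only [Fintype.card_fin] at hint hle hval
  rw [← hval]
  exact integral_mono_ae hint hsel_int hle

/-- For `K` i.i.d. samples from `p` and Bradley–Terry selection `X̂`
with weights proportional to `e^{r(X_k)}`,
`E[e^{r(X̂)}] ≥ E_p[e^r] + ((K−1)/K) · Var_p[e^r] / e^{r_max}`. -/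
theorem stmt_6 {d : ℕ} (K : ℕ) (hK : 1 ≤ K) (p r : (Fin d → ℝ) → ℝ) (rmax : ℝ)
    (hp_nonneg : ∀ x, 0 ≤ p x) (hp_meas : Measurable p)
    (hp_int : Integrable p) (hp_one : ∫ x, p x = 1)
    (hr_meas : Measurable r)
    (hr_ub : ∀ᵐ x, p x ≠ 0 → r x ≤ rmax)
    (hr_int : Integrable (fun x => p x * exp (r x)))
    (hr2_int : Integrable (fun x => p x * exp (2 * r x)))
    (hsel_int : Integrable (fun x : Fin K → (Fin d → ℝ) =>
      (∏ j, p (x j)) * ∑ k, exp (r (x k)) / (∑ j, exp (r (x j))) * exp (r (x k)))) :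
    (∫ x, p x * exp (r x))
      + (((K : ℝ) - 1) / K)
          * ((∫ x, p x * exp (2 * r x)) - (∫ x, p x * exp (r x)) ^ 2) / exp rmax
      ≤ ∫ x : Fin K → (Fin d → ℝ),
          (∏ j, p (x j)) * ∑ k, exp (r (x k)) / (∑ j, exp (r (x j))) * exp (r (x k)) :=
  stmt_6_general K hK p r rmax hp_nonneg hp_int hp_one hr_ub hr_int hr2_int hsel_int
end

section
/- Define the recursion a_{t+1} = (1/(1+λ))·a_data + (λ/(1+λ))·(a_t + c_t) with a_0 = a_data, where each c_t ≥ φ·C_min for a constant C_min ≤ 0. Then for all t, a_{t+1} ≥ a_data + φ·(1+λ)·(1 − (λ/(1+λ))^{t+1})·C_min·(λ/(1+λ)), and in particular a_{t+1} ≥ a_data + φ·(1+λ)·C_min for all t. -/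
/-!
With `r = λ/(1+λ)` the weight `1/(1+λ)` is `1 - r`, so `b_t = a_t - a_data` satisfies
`b_0 = 0` and `b_{t+1} = r (b_t + c_t) ≥ r (b_t + φ C_min)`. Hence
`b_t ≥ φ C_min · r · ∑_{i<t} r^i`, and `∑_{i<t} r^i = (1+λ)(1 - r^t)` because `(1+λ)(1 - r) = 1`.
The uniform bound follows since `r (1 - r^t) ≤ 1` and `φ (1+λ) C_min ≤ 0`.
-/

open Finset

theorem geom_sum_lower_bound_of_mix_recursion {r x₀ m : ℝ} {x c : ℕ → ℝ} (hr : 0 ≤ r)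
    (h₀ : x 0 = x₀) (hrec : ∀ t, x (t + 1) = (1 - r) * x₀ + r * (x t + c t))
    (hc : ∀ t, m ≤ c t) (t : ℕ) :
    x₀ + m * r * ∑ i ∈ range t, r ^ i ≤ x t := by
  induction t with
  | zero => simp [h₀]
  | succ t ih =>
    calc x₀ + m * r * ∑ i ∈ range (t + 1), r ^ i
        = (1 - r) * x₀ + r * ((x₀ + m * r * ∑ i ∈ range t, r ^ i) + m) := by
          rw [geom_sum_succ]; ring
      _ ≤ (1 - r) * x₀ + r * (x t + c t) := by gcongr; exact hc t
      _ = x (t + 1) := (hrec t).symm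

theorem one_div_one_add_eq_one_sub_div {l : ℝ} (hl : 0 ≤ l) : 1 / (1 + l) = 1 - l / (1 + l) := by
  field_simp
  ring

theorem geom_sum_div_one_add {l : ℝ} (hl : 0 ≤ l) (n : ℕ) :
    ∑ i ∈ range n, (l / (1 + l)) ^ i = (1 + l) * (1 - (l / (1 + l)) ^ n) := by
  rw [← mul_neg_geom_sum, ← one_div_one_add_eq_one_sub_div hl, ← mul_assoc,
    mul_one_div_cancel (by positivity), one_mul]

/-- For the mixed-data recursion
`a_{t+1} = (1/(1+λ))·a_data + (λ/(1+λ))·(a_t + c_t)` with `a_0 = a_data` and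
`c_t ≥ φ·C_min`, `C_min ≤ 0`, we have for all `t`:
`a_{t+1} ≥ a_data + φ·(1+λ)·(1 − (λ/(1+λ))^{t+1})·C_min·(λ/(1+λ))`, and in
particular `a_{t+1} ≥ a_data + φ·(1+λ)·C_min`. -/
theorem stmt_8 (l φ Cmin adata : ℝ) (a c : ℕ → ℝ)
    (hl : 0 ≤ l) (hφ : φ ∈ Set.Icc (0 : ℝ) 1) (hC : Cmin ≤ 0)
    (ha0 : a 0 = adata)
    (hrec : ∀ t, a (t + 1) = (1 / (1 + l)) * adata + (l / (1 + l)) * (a t + c t))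
    (hc : ∀ t, φ * Cmin ≤ c t) :
    ∀ t : ℕ,
      adata + φ * (1 + l) * (1 - (l / (1 + l)) ^ (t + 1)) * Cmin * (l / (1 + l))
        ≤ a (t + 1)
      ∧ adata + φ * (1 + l) * Cmin ≤ a (t + 1) := by
  intro t
  set r := l / (1 + l)
  have hr₀ : 0 ≤ r := by positivity
  have hr₁ : r ≤ 1 := div_le_one_of_le₀ (by linarith) (by linarith)
  have hrec' : ∀ t, a (t + 1) = (1 - r) * adata + r * (a t + c t) := by
    simpa only [one_div_one_add_eq_one_sub_div hl] using hrec
  have hlow := geom_sum_lower_bound_of_mix_recursion hr₀ ha0 hrec' hc (t + 1)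
  rw [geom_sum_div_one_add hl] at hlow
  have hsharp : adata + φ * (1 + l) * (1 - r ^ (t + 1)) * Cmin * r ≤ a (t + 1) := by
    linarith
  refine ⟨hsharp, le_trans ?_ hsharp⟩
  have hK : φ * (1 + l) * Cmin ≤ 0 :=
    mul_nonpos_of_nonneg_of_nonpos (mul_nonneg hφ.1 (by linarith)) hC
  have hs : (1 - r ^ (t + 1)) * r ≤ 1 :=
    mul_le_one₀ (by linarith [pow_nonneg hr₀ (t + 1)]) hr₀ hr₁
  linarith [mul_le_mul_of_nonpos_left hs hK]
end

section
/- There exists a probability measure p on a two-point set {a, b}, reward functions r, r̃, and φ ∈ (0,1) such that the adversarially reweighted update q(x) = p(x)·[(1−φ)·e^{r(x)}/E_p[e^{r}] + φ·e^{r̃(x)}/E_p[e^{r̃}]] satisfies E_q[e^{r}] < E_p[e^{r}]: with negatively correlated adversarial rewards, the expected user reward can strictly decrease in one retraining step. -/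
/-!
The update value is `(1 - φ) A + φ B`, where `A = E_p[e^{2r}] / E_p[e^r]` and
`B = E_p[e^{r̃} e^r] / E_p[e^{r̃}]` is the mean of `e^r` under `p` tilted by `e^{r̃}`.
As `φ → 1` this tends to `B`, so it suffices that `B < E_p[e^r]`. For the uniform `p` on two
points, `r = (1, 0)` and `r̃ = (0, 1)`, we get `B = e / ((1 + e) / 2)` and `E_p[e^r] = (1 + e) / 2`,
and `B < E_p[e^r]` is the strict AM–GM inequality `e < ((1 + e) / 2) ^ 2`.
-/

open Real Filter Topology

noncomputable def tiltedExpMean {ι : Type*} [Fintype ι] (p r s : ι → ℝ) : ℝ :=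
  (∑ x, p x * exp (s x) * exp (r x)) / ∑ x, p x * exp (s x)

lemma sum_mixedUpdate_mul_exp_eq {ι : Type*} [Fintype ι] (p r s : ι → ℝ) (φ : ℝ) :
    ∑ x, p x * ((1 - φ) * exp (r x) / (∑ z, p z * exp (r z))
        + φ * exp (s x) / (∑ z, p z * exp (s z))) * exp (r x)
      = (1 - φ) * tiltedExpMean p r r + φ * tiltedExpMean p r s := by
  rw [tiltedExpMean, tiltedExpMean, Finset.sum_div, Finset.sum_div, Finset.mul_sum,
    Finset.mul_sum, ← Finset.sum_add_distrib]
  exact Finset.sum_congr rfl fun x _ => by ring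

lemma exists_mem_Ioo_one_sub_mul_add_mul_lt {a b m : ℝ} (hb : b < m) :
    ∃ φ ∈ Set.Ioo (0 : ℝ) 1, (1 - φ) * a + φ * b < m := by
  have hlim : Tendsto (fun φ : ℝ => (1 - φ) * a + φ * b) (𝓝[<] 1) (𝓝 b) := by
    have : Continuous fun φ : ℝ => (1 - φ) * a + φ * b := by fun_prop
    simpa using (this.tendsto 1).mono_left nhdsWithin_le_nhds
  have hIoo : ∀ᶠ φ in 𝓝[<] (1 : ℝ), φ ∈ Set.Ioo (0 : ℝ) 1 :=
    Ioo_mem_nhdsLT (by norm_num : (0 : ℝ) < 1)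
  exact (hIoo.and (hlim.eventually (gt_mem_nhds hb))).exists

lemma tiltedExpMean_two_point_lt :
    tiltedExpMean ![1 / 2, 1 / 2] ![1, 0] ![0, 1] < ∑ x, ![1 / 2, 1 / 2] x * exp (![1, 0] x) := by
  have hamgm : exp 1 < ((1 + exp 1) / 2) ^ 2 := by
    have : exp 1 ≠ 1 := by simp
    nlinarith [sq_pos_of_ne_zero (sub_ne_zero.mpr this)]
  simp only [tiltedExpMean, Fin.sum_univ_two, Matrix.cons_val_zero, Matrix.cons_val_one,
    exp_zero]
  rw [div_lt_iff₀ (by positivity)]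
  nlinarith

/-- There exist a probability measure `p` on a two-point set,
rewards `r, r̃`, and `φ ∈ (0,1)` such that the adversarially reweighted update
satisfies `E_q[e^r] < E_p[e^r]`: expected user reward can strictly decrease. -/
theorem stmt_13 :
    ∃ (p r rt : Fin 2 → ℝ) (φ : ℝ),
      (∀ x, 0 ≤ p x) ∧ (∑ x, p x = 1) ∧ φ ∈ Set.Ioo (0 : ℝ) 1 ∧
      (∑ x, p x * ((1 - φ) * exp (r x) / (∑ z, p z * exp (r z))
            + φ * exp (rt x) / (∑ z, p z * exp (rt z))) * exp (r x))
        < ∑ x, p x * exp (r x) := by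
  obtain ⟨φ, hφ, hlt⟩ := exists_mem_Ioo_one_sub_mul_add_mul_lt
    (a := tiltedExpMean ![1 / 2, 1 / 2] ![1, 0] ![1, 0]) tiltedExpMean_two_point_lt
  refine ⟨![1 / 2, 1 / 2], ![1, 0], ![0, 1], φ, ?_, ?_, hφ, ?_⟩
  · intro x
    fin_cases x <;> norm_num
  · norm_num [Fin.sum_univ_two]
  · rwa [sum_mixedUpdate_mul_exp_eq]
end

section
/- For K i.i.d. samples X₁, …, X_K from p and Bradley–Terry selection X̂ with P(X̂ = X_k | X₁,…,X_K) = e^{r(X_k)}/Σ_j e^{r(X_j)}, the density of X̂ is p_{X̂}(x) = p(x)·E_{X₂,…,X_K∼p}[K·e^{r(x)}/(e^{r(x)} + Σ_{j=2}^K e^{r(X_j)})]. In particular, as K → ∞, if r is bounded then p_{X̂}(x) → p(x)·e^{r(x)}/E_p[e^{r}] pointwise for each x with p(x) > 0. -/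
/-!
Moving the `k`-th sample to the front, the `k`-th term of the selection integral becomes
`∫ p(x) · e^{r(x)} / (e^{r(x)} + Σ_{j≥2} e^{r(X_j)}) · h(x)`, the same for every `k`; summing the
`K` equal terms gives the density formula. For the limit, realise `X₂, X₃, …` as the coordinates
of the infinite product measure: by the strong law of large numbers
`K e^{r(x)} / (e^{r(x)} + Σ_{j=2}^K e^{r(X_j)}) → e^{r(x)} / E_p[e^r]` almost surely, and since
`r` is bounded these quantities are uniformly bounded, so dominated convergence applies.
-/

open MeasureTheory Real Filter ProbabilityTheory Finset Topology

namespace MeasureTheory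

variable {α : Type*} [MeasurableSpace α]

theorem integral_withDensity_ofReal (μ : Measure α) {p : α → ℝ} (hp_nonneg : ∀ a, 0 ≤ p a)
    (hp_meas : Measurable p) (f : α → ℝ) :
    ∫ a, f a ∂μ.withDensity (fun a => ENNReal.ofReal (p a)) = ∫ a, p a * f a ∂μ := by
  rw [integral_withDensity_eq_integral_toReal_smul (by fun_prop)
    (ae_of_all _ fun _ => ENNReal.ofReal_lt_top)]
  simp_rw [ENNReal.toReal_ofReal (hp_nonneg _), smul_eq_mul]

theorem isProbabilityMeasure_withDensity_ofReal {μ : Measure α} {p : α → ℝ}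
    (hp_nonneg : ∀ a, 0 ≤ p a) (hp : Integrable p μ) (hp_one : ∫ a, p a ∂μ = 1) :
    IsProbabilityMeasure (μ.withDensity fun a => ENNReal.ofReal (p a)) := by
  constructor
  rw [withDensity_apply _ MeasurableSet.univ, Measure.restrict_univ,
    ← ofReal_integral_eq_lintegral_ofReal hp (ae_of_all _ hp_nonneg), hp_one, ENNReal.ofReal_one]

theorem Measure.pi_withDensity_ofReal {ι : Type*} [Fintype ι] (μ : Measure α) [SigmaFinite μ]
    {p : α → ℝ} (hp_nonneg : ∀ a, 0 ≤ p a) (hp : Integrable p μ) :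
    Measure.pi (fun _ : ι => μ.withDensity fun a => ENNReal.ofReal (p a))
      = (Measure.pi fun _ : ι => μ).withDensity fun x => ENNReal.ofReal (∏ i, p (x i)) := by
  refine pi_eq fun s hs => ?_
  rw [withDensity_apply _ (MeasurableSet.univ_pi hs), restrict_pi_pi,
    ← ofReal_integral_eq_lintegral_ofReal (Integrable.fintype_prod fun i => hp.restrict)
      (ae_of_all _ fun x => prod_nonneg fun i _ => hp_nonneg _),
    integral_fintype_prod_eq_prod,
    ENNReal.ofReal_prod_of_nonneg fun i _ => integral_nonneg fun a => hp_nonneg a]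
  refine prod_congr rfl fun i _ => ?_
  rw [withDensity_apply _ (hs i),
    ofReal_integral_eq_lintegral_ofReal hp.restrict (ae_of_all _ hp_nonneg)]

theorem integral_pi_withDensity_ofReal {ι : Type*} [Fintype ι] (μ : Measure α) [SigmaFinite μ]
    {p : α → ℝ} (hp_nonneg : ∀ a, 0 ≤ p a) (hp_meas : Measurable p) (hp : Integrable p μ)
    (F : (ι → α) → ℝ) :
    ∫ x, F x ∂Measure.pi (fun _ : ι => μ.withDensity fun a => ENNReal.ofReal (p a))
      = ∫ x, (∏ i, p (x i)) * F x ∂Measure.pi fun _ => μ := by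
  rw [Measure.pi_withDensity_ofReal μ hp_nonneg hp,
    integral_withDensity_ofReal _ (fun x => prod_nonneg fun i _ => hp_nonneg _) (by fun_prop)]

end MeasureTheory

theorem tendsto_add_one_mul_div_add_of_tendsto_div {S : ℕ → ℝ} {E : ℝ} (hE : E ≠ 0)
    (hS : Tendsto (fun n : ℕ => S n / n) atTop (𝓝 E)) (b : ℝ) :
    Tendsto (fun n : ℕ => ((n : ℝ) + 1) * b / (b + S n)) atTop (𝓝 (b / E)) := by
  have hlim : Tendsto (fun n : ℕ => (1 + 1 / (n : ℝ)) * b / (b / n + S n / n)) atTop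
      (𝓝 ((1 + 0) * b / (0 + E))) :=
    ((tendsto_const_nhds.add tendsto_one_div_atTop_nhds_zero_nat).mul_const b).div
      ((tendsto_const_div_atTop_nhds_zero_nat b).add hS) (by simpa using hE)
  rw [add_zero, one_mul, zero_add] at hlim
  refine hlim.congr' ((eventually_ne_atTop 0).mono fun n hn => ?_)
  have hn' : (n : ℝ) ≠ 0 := Nat.cast_ne_zero.2 hn
  rw [← add_div, one_add_div hn', div_mul_eq_mul_div, div_div_div_cancel_right₀ hn']

section BradleyTerry

variable {α : Type*} [MeasurableSpace α]

/-- The density, relative to `P`, of the Bradley–Terry selection with weights `w` among `m + 1`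
i.i.d. samples of `P`. -/
noncomputable def bradleyTerryDensity (P : Measure α) (w : α → ℝ) (m : ℕ) (a : α) : ℝ :=
  ∫ y, ((m : ℝ) + 1) * w a / (w a + ∑ j, w (y j)) ∂Measure.pi fun _ : Fin m => P

variable (P : Measure α) [IsProbabilityMeasure P]

theorem ProbabilityTheory.ae_tendsto_sum_range_div_infinitePi {f : α → ℝ} (hf : Measurable f)
    (hfi : Integrable f P) :
    ∀ᵐ ω ∂Measure.infinitePi (fun _ : ℕ => P),
      Tendsto (fun n : ℕ => (∑ i ∈ range n, f (ω i)) / n) atTop (𝓝 (∫ a, f a ∂P)) := by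
  have hlaw : ∀ i, MeasurePreserving (fun ω : ℕ → α => ω i) (Measure.infinitePi fun _ => P) P :=
    measurePreserving_eval_infinitePi _
  have hident : ∀ i, IdentDistrib (fun ω : ℕ → α => ω i) (fun ω => ω 0)
      (Measure.infinitePi fun _ => P) (Measure.infinitePi fun _ => P) := fun i =>
    ⟨(measurable_pi_apply i).aemeasurable, (measurable_pi_apply 0).aemeasurable,
      (hlaw i).map_eq.trans (hlaw 0).map_eq.symm⟩
  have hmean := integral_map (hlaw 0).measurable.aemeasurable
    (hf.aestronglyMeasurable (μ := (Measure.infinitePi fun _ : ℕ => P).map fun ω => ω 0))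
  rw [(hlaw 0).map_eq] at hmean
  convert strong_law_ae_real (fun i (ω : ℕ → α) => f (ω i))
    ((hlaw 0).integrable_comp_of_integrable hfi)
    (fun i j hij => (iIndepFun_infinitePi (P := fun _ => P) fun _ => hf).indepFun hij)
    (fun i => (hident i).comp hf) using 4

theorem MeasureTheory.integral_pi_fin_eq_integral_infinitePi {E : Type*} [NormedAddCommGroup E]
    [NormedSpace ℝ E] {m : ℕ} {F : (Fin m → α) → E}
    (hF : AEStronglyMeasurable F (Measure.pi fun _ => P)) :
    ∫ y, F y ∂Measure.pi (fun _ => P)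
      = ∫ ω, F (fun i => ω i) ∂Measure.infinitePi fun _ : ℕ => P := by
  have hmap : (Measure.infinitePi fun _ : ℕ => P).map (fun ω (i : Fin m) => ω i)
      = Measure.pi fun _ => P := by
    rw [Measure.map_infinitePi_infinitePi_of_inj Fin.val_injective, Measure.infinitePi_eq_pi]
  rw [← hmap] at hF ⊢
  exact integral_map (measurable_pi_lambda _ fun i => measurable_pi_apply _).aemeasurable hF


theorem integral_pi_softmax_mul_eq_bradleyTerryDensity {w : α → ℝ} (hw : Measurable w)
    (hw_pos : ∀ a, 0 < w a) {h : α → ℝ} (hh : Integrable h P) (m : ℕ) :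
    ∫ x, ∑ k, w (x k) / (∑ j, w (x j)) * h (x k) ∂Measure.pi (fun _ : Fin (m + 1) => P)
      = ∫ a, bradleyTerryDensity P w m a * h a ∂P := by
  set φ : α × (Fin m → α) → ℝ := fun z => w z.1 / (w z.1 + ∑ j, w (z.2 j)) * h z.1
  have hφ : Integrable φ (P.prod (Measure.pi fun _ => P)) := by
    refine (hh.comp_fst _).bdd_mul (c := 1) (Measurable.aestronglyMeasurable (by fun_prop))
      (ae_of_all _ fun z => ?_)
    have hden : w z.1 ≤ w z.1 + ∑ j, w (z.2 j) :=
      le_add_of_nonneg_right (sum_nonneg fun j _ => (hw_pos _).le)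
    rw [Real.norm_of_nonneg (div_nonneg (hw_pos _).le ((hw_pos _).le.trans hden)),
      div_le_one ((hw_pos _).trans_le hden)]
    exact hden
  have hterm : ∀ k : Fin (m + 1),
      (fun x : Fin (m + 1) → α => w (x k) / (∑ j, w (x j)) * h (x k))
        = φ ∘ MeasurableEquiv.piFinSuccAbove (fun _ => α) k := by
    intro k
    funext x
    simp [φ, Fin.sum_univ_succAbove _ k, MeasurableEquiv.piFinSuccAbove_apply, Fin.removeNth]
  have hmp := measurePreserving_piFinSuccAbove (fun _ : Fin (m + 1) => P)
  calc ∫ x, ∑ k, w (x k) / (∑ j, w (x j)) * h (x k) ∂Measure.pi (fun _ : Fin (m + 1) => P)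
      = ∑ k : Fin (m + 1), ∫ z, φ z ∂(P.prod (Measure.pi fun _ => P)) := by
        rw [integral_finsetSum]
        · refine sum_congr rfl fun k _ => ?_
          rw [hterm k]
          exact (hmp k).integral_comp' φ
        · intro k _
          rw [hterm k]
          exact (hmp k).integrable_comp_emb (MeasurableEquiv.measurableEmbedding _) |>.mpr hφ
    _ = ((m : ℝ) + 1)
          * ∫ a, (∫ y : Fin m → α, w a / (w a + ∑ j, w (y j)) ∂Measure.pi fun _ => P) * h a ∂P := by
        simp [integral_prod _ hφ, φ, integral_mul_const]
    _ = ∫ a, bradleyTerryDensity P w m a * h a ∂P := by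
        rw [← integral_const_mul]
        refine integral_congr_ae (ae_of_all _ fun a => ?_)
        simp_rw [bradleyTerryDensity, mul_div_assoc, integral_const_mul]
        ring

theorem tendsto_bradleyTerryDensity {w : α → ℝ} (hw : Measurable w) (hwi : Integrable w P)
    {δ : ℝ} (hδ : 0 < δ) (hwδ : ∀ a, δ ≤ w a) (a : α) :
    Tendsto (fun m => bradleyTerryDensity P w m a) atTop (𝓝 (w a / ∫ x, w x ∂P)) := by
  set b := w a
  have hb : 0 < b := hδ.trans_le (hwδ a)
  have hE : δ ≤ ∫ x, w x ∂P := by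
    simpa using integral_mono (integrable_const δ) hwi hwδ
  have hrange : ∀ m, bradleyTerryDensity P w m a
      = ∫ ω, ((m : ℝ) + 1) * b / (b + ∑ j ∈ range m, w (ω j))
          ∂Measure.infinitePi fun _ : ℕ => P := by
    intro m
    rw [bradleyTerryDensity,
      integral_pi_fin_eq_integral_infinitePi P (Measurable.aestronglyMeasurable (by fun_prop))]
    refine integral_congr_ae (ae_of_all _ fun ω => ?_)
    dsimp only
    rw [Fin.sum_univ_eq_sum_range (fun j => w (ω j))]
  have hbound : ∀ (m : ℕ) (ω : ℕ → α),
      ‖((m : ℝ) + 1) * b / (b + ∑ j ∈ range m, w (ω j))‖ ≤ b / min b δ := by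
    intro m ω
    have hsum : m * δ ≤ ∑ j ∈ range m, w (ω j) := by
      simpa using card_nsmul_le_sum (range m) _ δ fun j _ => hwδ (ω j)
    have hmin : 0 < min b δ := lt_min hb hδ
    have hden : min b δ * ((m : ℝ) + 1) ≤ b + ∑ j ∈ range m, w (ω j) := by
      nlinarith [min_le_left b δ, min_le_right b δ, (Nat.cast_nonneg m : (0 : ℝ) ≤ m)]
    have hden_pos : 0 < b + ∑ j ∈ range m, w (ω j) := lt_of_lt_of_le (by positivity) hden
    rw [Real.norm_of_nonneg (by positivity), div_le_div_iff₀ hden_pos hmin]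
    nlinarith
  have hlim := tendsto_integral_of_dominated_convergence (fun _ => b / min b δ)
    (fun m => Measurable.aestronglyMeasurable (by fun_prop)) (integrable_const _)
    (fun m => ae_of_all _ (hbound m))
    (μ := Measure.infinitePi fun _ : ℕ => P) (f := fun _ => b / ∫ x, w x ∂P) ?_
  · simpa [hrange] using hlim
  filter_upwards [ae_tendsto_sum_range_div_infinitePi P hw hwi] with ω hω
  exact tendsto_add_one_mul_div_add_of_tendsto_div (hδ.trans_le hE).ne' hω b

end BradleyTerry

theorem stmt_14_general {d : ℕ} (p r : (Fin d → ℝ) → ℝ)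
    (hp_nonneg : ∀ x, 0 ≤ p x) (hp_meas : Measurable p)
    (hp_int : Integrable p) (hp_one : ∫ x, p x = 1)
    (hr_meas : Measurable r) (hr_bdd : ∃ C, ∀ x, |r x| ≤ C) :
    (∀ m : ℕ, ∀ h : (Fin d → ℝ) → ℝ, Measurable h → (∃ C, ∀ x, |h x| ≤ C) →
      ∫ x : Fin (m + 1) → (Fin d → ℝ),
          (∏ j, p (x j)) * ∑ k, exp (r (x k)) / (∑ j, exp (r (x j))) * h (x k)
        = ∫ x, (p x * ∫ y : Fin m → (Fin d → ℝ),
              (∏ j, p (y j))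
                * (((m : ℝ) + 1) * exp (r x) / (exp (r x) + ∑ j, exp (r (y j)))))
            * h x)
    ∧ (∀ x, 0 < p x →
      Tendsto (fun m : ℕ =>
          p x * ∫ y : Fin m → (Fin d → ℝ),
            (∏ j, p (y j))
              * (((m : ℝ) + 1) * exp (r x) / (exp (r x) + ∑ j, exp (r (y j)))))
        atTop (nhds (p x * exp (r x) / ∫ z, p z * exp (r z)))) := by
  obtain ⟨C, hC⟩ := hr_bdd
  set P := (volume : Measure (Fin d → ℝ)).withDensity fun x => ENNReal.ofReal (p x)
  have : IsProbabilityMeasure P := isProbabilityMeasure_withDensity_ofReal hp_nonneg hp_int hp_one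
  have hP := integral_withDensity_ofReal volume hp_nonneg hp_meas
  have hPpi : ∀ n (F : (Fin n → Fin d → ℝ) → ℝ),
      ∫ x, (∏ j, p (x j)) * F x = ∫ x, F x ∂Measure.pi fun _ => P := fun n F =>
    (integral_pi_withDensity_ofReal volume hp_nonneg hp_meas hp_int F).symm
  have hw_meas : Measurable fun x => exp (r x) := by fun_prop
  have hw_int : Integrable (fun x => exp (r x)) P :=
    Integrable.of_bound hw_meas.aestronglyMeasurable (exp C) (ae_of_all _ fun x => by
      rw [Real.norm_of_nonneg (exp_pos _).le]
      exact exp_le_exp.2 (abs_le.1 (hC x)).2)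
  have hdensity : ∀ m x, ∫ y : Fin m → (Fin d → ℝ), (∏ j, p (y j))
      * (((m : ℝ) + 1) * exp (r x) / (exp (r x) + ∑ j, exp (r (y j))))
        = bradleyTerryDensity P (fun x => exp (r x)) m x := fun m x => hPpi m _
  refine ⟨fun m h h_meas ⟨Ch, hCh⟩ => ?_, fun x _ => ?_⟩
  · have hh_int : Integrable h P := Integrable.of_bound h_meas.aestronglyMeasurable Ch
      (ae_of_all _ hCh)
    rw [hPpi, integral_pi_softmax_mul_eq_bradleyTerryDensity P hw_meas (fun x => exp_pos (r x))
      hh_int m, hP]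
    simp_rw [hdensity, mul_assoc]
  · simp_rw [hdensity, mul_div_assoc, ← hP]
    exact (tendsto_bradleyTerryDensity P hw_meas hw_int (exp_pos (-C))
      (fun y => exp_le_exp.2 (neg_le_of_abs_le (hC y))) x).const_mul (p x)

/-- For `K` i.i.d. samples from `p` and Bradley–Terry selection `X̂`,
the density of `X̂` is `p_X̂(x) = p(x)·E_{X₂,…,X_K}[K·e^{r(x)}/(e^{r(x)} + Σ_{j≥2} e^{r(X_j)})]`
(expressed via test functions), and as `K → ∞` (bounded `r`) it converges pointwise to
`p(x)·e^{r(x)}/E_p[e^r]` at every `x` with `p(x) > 0`. Here the `K`-sample case is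
written with `K = m + 1` so the remaining samples form an `m`-tuple. -/
theorem stmt_14 {d : ℕ} (p r : (Fin d → ℝ) → ℝ)
    (hp_nonneg : ∀ x, 0 ≤ p x) (hp_meas : Measurable p)
    (hp_int : Integrable p) (hp_one : ∫ x, p x = 1)
    (hr_meas : Measurable r) (hr_bdd : ∃ C, ∀ x, |r x| ≤ C)
    (hEr_pos : 0 < ∫ z, p z * exp (r z)) :
    (∀ m : ℕ, ∀ h : (Fin d → ℝ) → ℝ, Measurable h → (∃ C, ∀ x, |h x| ≤ C) →
      ∫ x : Fin (m + 1) → (Fin d → ℝ),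
          (∏ j, p (x j)) * ∑ k, exp (r (x k)) / (∑ j, exp (r (x j))) * h (x k)
        = ∫ x, (p x * ∫ y : Fin m → (Fin d → ℝ),
              (∏ j, p (y j))
                * (((m : ℝ) + 1) * exp (r x) / (exp (r x) + ∑ j, exp (r (y j)))))
            * h x)
    ∧ (∀ x, 0 < p x →
      Tendsto (fun m : ℕ =>
          p x * ∫ y : Fin m → (Fin d → ℝ),
            (∏ j, p (y j))
              * (((m : ℝ) + 1) * exp (r x) / (exp (r x) + ∑ j, exp (r (y j)))))
        atTop (nhds (p x * exp (r x) / ∫ z, p z * exp (r z)))) :=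
  stmt_14_general p r hp_nonneg hp_meas hp_int hp_one hr_meas hr_bdd
end
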